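/- arXiv:2012.04866 — 3 statements merged into one kernel-verified Lean document; each statement's English description precedes it below -/
import Mathlib

section
/- Suppose Π : ℝ → ℝ^{3n×3n} is differentiable on [0,T] and satisfies the matrix Riccati ODE −Π̇(t) = Π(t)𝔸(t) + 𝔸(t)ᵀΠ(t) − Π(t)𝔹R⁻¹𝔹ᵀΠ(t) + ℚ for all t ∈ [0,T], with terminal condition Π(T) = 0. Then its top-left n×n block Π₁₁(t) satisfies the reduced n×n Riccati ODE −Π̇₁₁(t) = Π₁₁(t)A + AᵀΠ₁₁(t) − Π₁₁(t)BR⁻¹BᵀΠ₁₁(t) + Q for all t ∈ [0,T], with Π₁₁(T) = 0. -/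
open Matrix Set

/-!
Write `E = [I; 0]` for the inclusion of the first block of coordinates, so that `Eᵀ Π E = Π₁₁`.
Because `𝔸` is block upper triangular, `𝔸 E = E A`; moreover `𝔹 = E B` and `[I, -H, -Ĥ] E = I`.
Conjugating the Riccati right-hand side by `E` therefore turns every term of the extended
equation into the corresponding term of the reduced one, and `Π₁₁` inherits both the equation and
the terminal condition entrywise from `Π`.
-/

namespace Matrix

variable {ι κ μ 𝕜 : Type*} [Fintype ι] [Fintype κ] [Fintype μ] [DecidableEq μ] [CommRing 𝕜]

noncomputable def riccatiRHS (A : Matrix ι ι 𝕜) (B : Matrix ι μ 𝕜) (R : Matrix μ μ 𝕜)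
    (Q P : Matrix ι ι 𝕜) : Matrix ι ι 𝕜 :=
  P * A + Aᵀ * P - P * B * R⁻¹ * Bᵀ * P + Q

theorem transpose_mul_riccatiRHS_mul {A : Matrix ι ι 𝕜} {B : Matrix ι μ 𝕜} {Q : Matrix ι ι 𝕜}
    {A' : Matrix κ κ 𝕜} {B' : Matrix κ μ 𝕜} {Q' : Matrix κ κ 𝕜} (E : Matrix ι κ 𝕜)
    (hA : A * E = E * A') (hB : B = E * B') (hQ : Eᵀ * Q * E = Q') (R : Matrix μ μ 𝕜)
    (P : Matrix ι ι 𝕜) :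
    Eᵀ * riccatiRHS A B R Q P * E = riccatiRHS A' B' R Q' (Eᵀ * P * E) := by
  have hAt : Eᵀ * Aᵀ = A'ᵀ * Eᵀ := by rw [← transpose_mul, hA, transpose_mul]
  subst hB hQ
  simp only [riccatiRHS, Matrix.mul_add, Matrix.add_mul, Matrix.mul_sub, Matrix.sub_mul,
    transpose_mul, Matrix.mul_assoc, hA]
  rw [← Matrix.mul_assoc Eᵀ Aᵀ, hAt]
  simp only [Matrix.mul_assoc]

theorem transpose_mul_transpose_mul_mul_mul_of_mul_eq_one [DecidableEq κ] {E : Matrix ι κ 𝕜}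
    {L : Matrix κ ι 𝕜} (h : L * E = 1) (Q : Matrix κ κ 𝕜) : Eᵀ * (Lᵀ * Q * L) * E = Q := by
  rw [Matrix.mul_assoc, Matrix.mul_assoc, h, Matrix.mul_one, ← Matrix.mul_assoc,
    ← transpose_mul, h, transpose_one, Matrix.one_mul]

section Blocks

variable {n k l : Type*} [Fintype n] [DecidableEq n]

theorem transpose_fromRows_one_zero_mul_mul [Fintype k] (M : Matrix (n ⊕ k) (n ⊕ k) 𝕜) :
    (fromRows (1 : Matrix n n 𝕜) (0 : Matrix k n 𝕜))ᵀ * M *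
      fromRows (1 : Matrix n n 𝕜) (0 : Matrix k n 𝕜) = M.toBlocks₁₁ := by
  rw [← fromBlocks_toBlocks M, transpose_fromRows, transpose_one, transpose_zero,
    Matrix.mul_assoc, fromBlocks_mul_fromRows, fromCols_mul_fromRows]
  simp

theorem fromBlocks_zero₂₁_mul_fromRows_one_zero [Fintype k] (A : Matrix n n 𝕜) (X : Matrix n k 𝕜)
    (D : Matrix k k 𝕜) :
    fromBlocks A X 0 D * fromRows (1 : Matrix n n 𝕜) (0 : Matrix k n 𝕜) =
      fromRows (1 : Matrix n n 𝕜) (0 : Matrix k n 𝕜) * A := by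
  rw [fromBlocks_mul_fromRows, fromRows_mul]
  simp

theorem fromRows_one_zero_mul (B : Matrix n l 𝕜) :
    fromRows (1 : Matrix n n 𝕜) (0 : Matrix k n 𝕜) * B = fromRows B 0 := by
  simp [fromRows_mul]

theorem fromCols_one_mul_fromRows_one_zero [Fintype k] (Y : Matrix n k 𝕜) :
    fromCols (1 : Matrix n n 𝕜) Y * fromRows (1 : Matrix n n 𝕜) (0 : Matrix k n 𝕜) = 1 := by
  simp [fromCols_mul_fromRows]

theorem toBlocks₁₁_riccatiRHS_fromBlocks_zero₂₁ [Fintype k] (A : Matrix n n 𝕜) (X : Matrix n k 𝕜)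
    (D : Matrix k k 𝕜) (B : Matrix n μ 𝕜) (R : Matrix μ μ 𝕜) (Q : Matrix n n 𝕜)
    (Y : Matrix n k 𝕜) (P : Matrix (n ⊕ k) (n ⊕ k) 𝕜) :
    (riccatiRHS (fromBlocks A X 0 D) (fromRows B 0) R
      ((fromCols (1 : Matrix n n 𝕜) Y)ᵀ * Q * fromCols (1 : Matrix n n 𝕜) Y)
      P).toBlocks₁₁ = riccatiRHS A B R Q P.toBlocks₁₁ := by
  rw [← transpose_fromRows_one_zero_mul_mul, ← transpose_fromRows_one_zero_mul_mul P]
  exact transpose_mul_riccatiRHS_mul _ (fromBlocks_zero₂₁_mul_fromRows_one_zero A X D)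
    (fromRows_one_zero_mul B).symm
    (transpose_mul_transpose_mul_mul_mul_of_mul_eq_one (fromCols_one_mul_fromRows_one_zero Y) Q) R P

end Blocks

end Matrix

theorem nce_riccati_top_left_block_general
    (n m : ℕ) (T : ℝ)
    (A F G Q H Hhat : Matrix (Fin n) (Fin n) ℝ)
    (B : Matrix (Fin n) (Fin m) ℝ)
    (R : Matrix (Fin m) (Fin m) ℝ)
    (A₂ : ℝ → Matrix (Fin n ⊕ Fin n) (Fin n ⊕ Fin n) ℝ)
    -- extended coefficients
    (𝓐 : ℝ → Matrix (Fin n ⊕ (Fin n ⊕ Fin n)) (Fin n ⊕ (Fin n ⊕ Fin n)) ℝ)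
    (h𝓐 : ∀ t, 𝓐 t = Matrix.fromBlocks A (Matrix.fromCols G F) 0 (A₂ t))
    (𝓑 : Matrix (Fin n ⊕ (Fin n ⊕ Fin n)) (Fin m) ℝ)
    (h𝓑 : 𝓑 = Matrix.fromRows B 0)
    (𝓠 : Matrix (Fin n ⊕ (Fin n ⊕ Fin n)) (Fin n ⊕ (Fin n ⊕ Fin n)) ℝ)
    (h𝓠 : 𝓠 = (Matrix.fromCols (1 : Matrix (Fin n) (Fin n) ℝ)
          (Matrix.fromCols (-H) (-Hhat)))ᵀ * Q *
        Matrix.fromCols (1 : Matrix (Fin n) (Fin n) ℝ)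
          (Matrix.fromCols (-H) (-Hhat)))
    -- the solution of the extended Riccati equation
    (P : ℝ → Matrix (Fin n ⊕ (Fin n ⊕ Fin n)) (Fin n ⊕ (Fin n ⊕ Fin n)) ℝ)
    (hODE : ∀ t ∈ Icc (0 : ℝ) T, ∀ i j, HasDerivAt (fun τ => P τ i j)
      ((-(P t * 𝓐 t + (𝓐 t)ᵀ * P t - P t * 𝓑 * R⁻¹ * 𝓑ᵀ * P t + 𝓠)) i j) t)
    (hterm : P T = 0) :
    (∀ t ∈ Icc (0 : ℝ) T, ∀ i j, HasDerivAt (fun τ => (P τ).toBlocks₁₁ i j)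
      ((-((P t).toBlocks₁₁ * A + Aᵀ * (P t).toBlocks₁₁
          - (P t).toBlocks₁₁ * B * R⁻¹ * Bᵀ * (P t).toBlocks₁₁ + Q)) i j) t)
      ∧ (P T).toBlocks₁₁ = 0 := by
  refine ⟨fun t ht i j => ?_, by rw [hterm]; rfl⟩
  have hblock :
      (riccatiRHS (𝓐 t) 𝓑 R 𝓠 (P t)).toBlocks₁₁ = riccatiRHS A B R Q (P t).toBlocks₁₁ := by
    rw [h𝓐, h𝓑, h𝓠]
    exact toBlocks₁₁_riccatiRHS_fromBlocks_zero₂₁ _ _ _ _ _ _ _ _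
  exact (hODE t ht (.inl i) (.inl j)).congr_deriv (congrArg (fun M => -M i j) hblock)

/-- The top-left `n×n` block `Π₁₁` of a solution `Π` of the `3n×3n`
extended Riccati ODE satisfies the reduced `n×n` Riccati ODE. -/
theorem nce_riccati_top_left_block
    (n m : ℕ) (hn : 0 < n) (hm : 0 < m) (T : ℝ) (hT : 0 < T)
    (A F G Q H Hhat : Matrix (Fin n) (Fin n) ℝ)
    (B : Matrix (Fin n) (Fin m) ℝ)
    (R : Matrix (Fin m) (Fin m) ℝ) (hR : IsUnit R.det)
    (A₂ : ℝ → Matrix (Fin n ⊕ Fin n) (Fin n ⊕ Fin n) ℝ)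
    (hA₂ : Continuous A₂)
    -- extended coefficients
    (𝓐 : ℝ → Matrix (Fin n ⊕ (Fin n ⊕ Fin n)) (Fin n ⊕ (Fin n ⊕ Fin n)) ℝ)
    (h𝓐 : ∀ t, 𝓐 t = Matrix.fromBlocks A (Matrix.fromCols G F) 0 (A₂ t))
    (𝓑 : Matrix (Fin n ⊕ (Fin n ⊕ Fin n)) (Fin m) ℝ)
    (h𝓑 : 𝓑 = Matrix.fromRows B 0)
    (𝓠 : Matrix (Fin n ⊕ (Fin n ⊕ Fin n)) (Fin n ⊕ (Fin n ⊕ Fin n)) ℝ)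
    (h𝓠 : 𝓠 = (Matrix.fromCols (1 : Matrix (Fin n) (Fin n) ℝ)
          (Matrix.fromCols (-H) (-Hhat)))ᵀ * Q *
        Matrix.fromCols (1 : Matrix (Fin n) (Fin n) ℝ)
          (Matrix.fromCols (-H) (-Hhat)))
    -- the solution of the extended Riccati equation
    (P : ℝ → Matrix (Fin n ⊕ (Fin n ⊕ Fin n)) (Fin n ⊕ (Fin n ⊕ Fin n)) ℝ)
    (hODE : ∀ t ∈ Icc (0 : ℝ) T, ∀ i j, HasDerivAt (fun τ => P τ i j)
      ((-(P t * 𝓐 t + (𝓐 t)ᵀ * P t - P t * 𝓑 * R⁻¹ * 𝓑ᵀ * P t + 𝓠)) i j) t)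
    (hterm : P T = 0) :
    (∀ t ∈ Icc (0 : ℝ) T, ∀ i j, HasDerivAt (fun τ => (P τ).toBlocks₁₁ i j)
      ((-((P t).toBlocks₁₁ * A + Aᵀ * (P t).toBlocks₁₁
          - (P t).toBlocks₁₁ * B * R⁻¹ * Bᵀ * (P t).toBlocks₁₁ + Q)) i j) t)
      ∧ (P T).toBlocks₁₁ = 0 :=
  nce_riccati_top_left_block_general n m T A F G Q H Hhat B R A₂ 𝓐 h𝓐 𝓑 h𝓑 𝓠 h𝓠 P hODE hterm
end

section
/- In the setting of the major-agent conjugation (with 𝔸₀(t), 𝕃(t), 𝕊(t) defined from continuous S, Π₁₂, Π₁₃ : ℝ → ℝ^{n×n} as Ā(t) = A + F − B(2R)⁻¹Bᵀ(S(t) + Π₁₃(t)), Ḡ(t) = G − B(2R)⁻¹BᵀΠ₁₂(t), 𝔸₀(t) = [[A₀, F₀], [Ḡ(t), Ā(t)]], 𝕊(t) = [Π₁₃(t) Π₁₂(t)], 𝕃(t) = [[A + F − B(2R)⁻¹BᵀS(t), G], [F₀, A₀]]), let Π₀ : ℝ → ℝ^{2n×2n} and s₁ : ℝ → ℝⁿ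 be continuous, set K(t) := 𝔦Π₀(t)𝔦 and 𝕄₀(t) := [0; −B(2R)⁻¹Bᵀs₁(t)] ∈ ℝ^{2n}. Then a differentiable s₀ : ℝ → ℝ^{2n} satisfies −ṡ₀(t) = (𝔸₀(t)ᵀ − Π₀(t)𝔹₀(2R₀)⁻¹𝔹₀ᵀ)s₀(t) + Π₀(t)𝕄₀(t) − 2η̄₀ on [0,T] with s₀(T) = 0 if and only if k := 𝔦s₀ satisfies −k̇(t) = (𝕃(t) − 𝔹̄(2R)⁻¹Bᵀ𝕊(t))ᵀk(t) − K(t)𝔹̄₀(2R₀)⁻¹𝔹̄₀ᵀk(t) − K(t)𝔹̄(2R)⁻¹Bᵀs₁(t) + 2f₀ on [0,T] with k(T) = 0. -/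
/-!
Conjugation by the block swap `𝔦` (a symmetric involution) carries the affine right-hand side of
the first equation to that of the second: `𝔦 𝔸₀ 𝔦 = 𝕃 - 𝔹̄ (2R)⁻¹ Bᵀ 𝕊` (the feedback terms of
`Ā` and `Ḡ` are exactly the `𝕊`-terms), `𝔦 𝔹₀ = 𝔹̄₀`, `𝔦 Π₀ 𝔦 = K`, `𝔦 𝕄₀ = -𝔹̄ (2R)⁻¹ Bᵀ s₁` and
`𝔦 η̄₀ = -f₀`. Since `𝔦` is a constant invertible matrix, `k = 𝔦 s₀` has derivative `𝔦 ṡ₀`, so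
the two terminal value problems are equivalent.
-/

open Matrix Set

namespace Matrix

variable {l m ι α : Type*}

def blockSwap (l α : Type*) [Zero α] [One α] [DecidableEq l] : Matrix (l ⊕ l) (l ⊕ l) α :=
  fromBlocks 0 1 1 0

@[simp]
theorem transpose_blockSwap [DecidableEq l] [Zero α] [One α] :
    (blockSwap l α)ᵀ = blockSwap l α := by
  simp [blockSwap, fromBlocks_transpose]

section Semiring

variable [Fintype l] [DecidableEq l] [Semiring α]

@[simp]
theorem blockSwap_mul_self : blockSwap l α * blockSwap l α = 1 := by
  simp [blockSwap, fromBlocks_multiply, fromBlocks_one]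

theorem blockSwap_mul_fromBlocks_mul_blockSwap (A B C D : Matrix l l α) :
    blockSwap l α * fromBlocks A B C D * blockSwap l α = fromBlocks D C B A := by
  simp [blockSwap, fromBlocks_multiply]

theorem blockSwap_mul_fromRows (A B : Matrix l m α) :
    blockSwap l α * fromRows A B = fromRows B A := by
  simp [blockSwap, fromBlocks_mul_fromRows]

theorem blockSwap_mulVec_sumElim (u v : l → α) :
    blockSwap l α *ᵥ Sum.elim u v = Sum.elim v u := by
  simp [blockSwap, fromBlocks_mulVec]

end Semiring

theorem fromBlocks_sub_fromRows_zero_mul_fromCols [Fintype l] [Fintype m] [Ring α]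
    (A B C D : Matrix l l α) (E : Matrix l m α) (W : Matrix m m α) (F : Matrix m l α)
    (P Q : Matrix l l α) :
    fromBlocks A B C D - fromRows E 0 * W * F * fromCols P Q
      = fromBlocks (A - E * W * F * P) (B - E * W * F * Q) C D := by
  rw [fromRows_mul, fromRows_mul, fromRows_mul_fromCols]
  simp only [Matrix.zero_mul, sub_eq_add_neg, fromBlocks_neg, fromBlocks_add, neg_zero, add_zero]

theorem mulVec_offsetField_of_involutive [Fintype ι] [DecidableEq ι] [Fintype m] [CommRing α]
    {J : Matrix ι ι α} (hJ : J * J = 1) (hJt : Jᵀ = J)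
    (A P : Matrix ι ι α) (E : Matrix ι m α) (W : Matrix m m α) (s μ η : ι → α) (c : α) :
    J *ᵥ (-((Aᵀ - P * E * W * Eᵀ) *ᵥ s + P *ᵥ μ - c • η))
      = -((J * A * J)ᵀ *ᵥ (J *ᵥ s) - (J * P * J * (J * E) * W * (J * E)ᵀ) *ᵥ (J *ᵥ s)
          + (J * P * J) *ᵥ (J *ᵥ μ) - c • (J *ᵥ η)) := by
  simp only [transpose_mul, hJt, mulVec_mulVec, Matrix.mul_assoc, ← Matrix.mul_assoc J J, hJ,
    Matrix.one_mul, Matrix.mul_one, mulVec_neg, mulVec_sub, mulVec_add, mulVec_smul, ← sub_mulVec,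
    Matrix.mul_sub]

end Matrix

theorem HasDerivAt.const_mulVec {ι κ : Type*} [Fintype ι] [Fintype κ] (M : Matrix κ ι ℝ)
    {s : ℝ → ι → ℝ} {v : ι → ℝ} {t : ℝ} (h : HasDerivAt s v t) :
    HasDerivAt (fun τ => M *ᵥ s τ) (M *ᵥ v) t :=
  (Matrix.mulVecLin M).toContinuousLinearMap.hasFDerivAt.comp_hasDerivAt t h

theorem hasDerivAt_mulVec_iff_of_mul_self_eq_one {ι : Type*} [Fintype ι] [DecidableEq ι]
    {J : Matrix ι ι ℝ} (hJ : J * J = 1) {s : ℝ → ι → ℝ} {v : ι → ℝ} {t : ℝ} :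
    HasDerivAt (fun τ => J *ᵥ s τ) (J *ᵥ v) t ↔ HasDerivAt s v t :=
  ⟨fun h => by simpa [mulVec_mulVec, hJ] using h.const_mulVec J, HasDerivAt.const_mulVec J⟩

theorem hasDerivAt_terminal_iff_of_mul_self_eq_one {ι : Type*} [Fintype ι] [DecidableEq ι]
    {J : Matrix ι ι ℝ} (hJ : J * J = 1) {s k Vs Vk : ℝ → ι → ℝ}
    (hk : ∀ t, k t = J *ᵥ s t) (hV : ∀ t, Vk t = J *ᵥ Vs t) (I : Set ℝ) (T : ℝ) :
    ((∀ t ∈ I, ∀ i, HasDerivAt (fun τ => s τ i) (Vs t i) t) ∧ s T = 0)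
      ↔ ((∀ t ∈ I, ∀ i, HasDerivAt (fun τ => k τ i) (Vk t i) t) ∧ k T = 0) := by
  obtain rfl : k = fun t => J *ᵥ s t := funext hk
  obtain rfl : Vk = fun t => J *ᵥ Vs t := funext hV
  have hzero : J *ᵥ s T = 0 ↔ s T = 0 :=
    ⟨fun h => by simpa [mulVec_mulVec, hJ] using congrArg (J *ᵥ ·) h, fun h => by simp [h]⟩
  simp only [← hasDerivAt_pi, hasDerivAt_mulVec_iff_of_mul_self_eq_one hJ, hzero]

theorem major_offset_equivalence_general
    (n m : ℕ) (T : ℝ)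
    (A₀ F₀ A F G Q₀ H₀ : Matrix (Fin n) (Fin n) ℝ)
    (B₀ B : Matrix (Fin n) (Fin m) ℝ)
    (R₀ R : Matrix (Fin m) (Fin m) ℝ)
    (η₀ : Fin n → ℝ)
    (S P₁₂ P₁₃ : ℝ → Matrix (Fin n) (Fin n) ℝ)
    (Abar : ℝ → Matrix (Fin n) (Fin n) ℝ)
    (hAbar : ∀ t, Abar t = A + F - B * ((2 : ℝ) • R)⁻¹ * Bᵀ * (S t + P₁₃ t))
    (Gbar : ℝ → Matrix (Fin n) (Fin n) ℝ)
    (hGbar : ∀ t, Gbar t = G - B * ((2 : ℝ) • R)⁻¹ * Bᵀ * P₁₂ t)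
    (𝓐₀ : ℝ → Matrix (Fin n ⊕ Fin n) (Fin n ⊕ Fin n) ℝ)
    (h𝓐₀ : ∀ t, 𝓐₀ t = Matrix.fromBlocks A₀ F₀ (Gbar t) (Abar t))
    (𝓢 : ℝ → Matrix (Fin n) (Fin n ⊕ Fin n) ℝ)
    (h𝓢 : ∀ t, 𝓢 t = Matrix.fromCols (P₁₃ t) (P₁₂ t))
    (𝓛 : ℝ → Matrix (Fin n ⊕ Fin n) (Fin n ⊕ Fin n) ℝ)
    (h𝓛 : ∀ t, 𝓛 t = Matrix.fromBlocks (A + F - B * ((2 : ℝ) • R)⁻¹ * Bᵀ * S t) G F₀ A₀)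
    (𝓑₀ : Matrix (Fin n ⊕ Fin n) (Fin m) ℝ) (h𝓑₀ : 𝓑₀ = Matrix.fromRows B₀ 0)
    (𝓑bar : Matrix (Fin n ⊕ Fin n) (Fin m) ℝ) (h𝓑bar : 𝓑bar = Matrix.fromRows B 0)
    (𝓑bar₀ : Matrix (Fin n ⊕ Fin n) (Fin m) ℝ) (h𝓑bar₀ : 𝓑bar₀ = Matrix.fromRows 0 B₀)
    (ηbar₀ : (Fin n ⊕ Fin n) → ℝ)
    (hηbar₀ : ηbar₀ = Sum.elim (Q₀ *ᵥ η₀) (-(H₀ᵀ *ᵥ (Q₀ *ᵥ η₀))))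
    (f₀ : (Fin n ⊕ Fin n) → ℝ)
    (hf₀ : f₀ = Sum.elim (H₀ᵀ *ᵥ (Q₀ *ᵥ η₀)) (-(Q₀ *ᵥ η₀)))
    (J : Matrix (Fin n ⊕ Fin n) (Fin n ⊕ Fin n) ℝ)
    (hJ : J = Matrix.fromBlocks 0 (1 : Matrix (Fin n) (Fin n) ℝ)
        (1 : Matrix (Fin n) (Fin n) ℝ) 0)
    (P₀ : ℝ → Matrix (Fin n ⊕ Fin n) (Fin n ⊕ Fin n) ℝ)
    (s₁ : ℝ → Fin n → ℝ)
    (K : ℝ → Matrix (Fin n ⊕ Fin n) (Fin n ⊕ Fin n) ℝ)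
    (hK : ∀ t, K t = J * P₀ t * J)
    (𝓜₀ : ℝ → (Fin n ⊕ Fin n) → ℝ)
    (h𝓜₀ : ∀ t, 𝓜₀ t = Sum.elim (fun _ => (0 : ℝ))
        (-((B * ((2 : ℝ) • R)⁻¹ * Bᵀ) *ᵥ s₁ t)))
    (s₀ : ℝ → (Fin n ⊕ Fin n) → ℝ)
    (k : ℝ → (Fin n ⊕ Fin n) → ℝ)
    (hk : ∀ t, k t = J *ᵥ s₀ t) :
    ((∀ t ∈ Icc (0 : ℝ) T, ∀ i, HasDerivAt (fun τ => s₀ τ i)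
        ((-(((𝓐₀ t)ᵀ - P₀ t * 𝓑₀ * ((2 : ℝ) • R₀)⁻¹ * 𝓑₀ᵀ) *ᵥ s₀ t
            + P₀ t *ᵥ 𝓜₀ t - (2 : ℝ) • ηbar₀)) i) t)
      ∧ s₀ T = 0)
    ↔ ((∀ t ∈ Icc (0 : ℝ) T, ∀ i, HasDerivAt (fun τ => k τ i)
        ((-((𝓛 t - 𝓑bar * ((2 : ℝ) • R)⁻¹ * Bᵀ * 𝓢 t)ᵀ *ᵥ k t
            - (K t * 𝓑bar₀ * ((2 : ℝ) • R₀)⁻¹ * 𝓑bar₀ᵀ) *ᵥ k t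
            - (K t * 𝓑bar * ((2 : ℝ) • R)⁻¹ * Bᵀ) *ᵥ s₁ t + (2 : ℝ) • f₀)) i) t)
      ∧ k T = 0) := by
  obtain rfl : J = blockSwap (Fin n) ℝ := hJ
  refine hasDerivAt_terminal_iff_of_mul_self_eq_one blockSwap_mul_self hk (fun t => ?_) _ T
  have hclosedLoop : 𝓛 t - 𝓑bar * ((2 : ℝ) • R)⁻¹ * Bᵀ * 𝓢 t
      = blockSwap (Fin n) ℝ * 𝓐₀ t * blockSwap (Fin n) ℝ := by
    rw [h𝓛, h𝓑bar, h𝓢, fromBlocks_sub_fromRows_zero_mul_fromCols, h𝓐₀,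
      blockSwap_mul_fromBlocks_mul_blockSwap, hAbar, hGbar, Matrix.mul_add, sub_sub]
  have hswap𝓑₀ : blockSwap (Fin n) ℝ * 𝓑₀ = 𝓑bar₀ := by
    rw [h𝓑₀, h𝓑bar₀, blockSwap_mul_fromRows]
  have hswap𝓜₀ : blockSwap (Fin n) ℝ *ᵥ 𝓜₀ t = -((𝓑bar * ((2 : ℝ) • R)⁻¹ * Bᵀ) *ᵥ s₁ t) := by
    rw [h𝓜₀, blockSwap_mulVec_sumElim, h𝓑bar, fromRows_mul, fromRows_mul, fromRows_mulVec,
      Matrix.zero_mul, Matrix.zero_mul, zero_mulVec, ← Pi.zero_def, ← Sum.elim_neg_neg, neg_zero]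
  have hswapη : blockSwap (Fin n) ℝ *ᵥ ηbar₀ = -f₀ := by
    rw [hηbar₀, hf₀, blockSwap_mulVec_sumElim, ← Sum.elim_neg_neg, neg_neg]
  rw [mulVec_offsetField_of_involutive blockSwap_mul_self transpose_blockSwap, ← hk, ← hK,
    hclosedLoop, hswap𝓑₀, hswap𝓜₀, hswapη]
  simp only [mulVec_neg, mulVec_mulVec, Matrix.mul_assoc, smul_neg]
  abel

/-- The major agent's offset consistency equation of the Nash
certainty equivalence approach is equivalent, after multiplication by the
block-swap matrix `𝔦`, to the offset consistency equation `(32)` of the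
probabilistic approach. -/
theorem major_offset_equivalence
    (n m : ℕ) (hn : 0 < n) (hm : 0 < m) (T : ℝ) (hT : 0 < T)
    (A₀ F₀ A F G Q₀ H₀ : Matrix (Fin n) (Fin n) ℝ)
    (B₀ B : Matrix (Fin n) (Fin m) ℝ)
    (R₀ R : Matrix (Fin m) (Fin m) ℝ) (hR₀ : IsUnit R₀.det) (hR : IsUnit R.det)
    (η₀ : Fin n → ℝ)
    (S P₁₂ P₁₃ : ℝ → Matrix (Fin n) (Fin n) ℝ)
    (hS : Continuous S) (hP₁₂ : Continuous P₁₂) (hP₁₃ : Continuous P₁₃)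
    (Abar : ℝ → Matrix (Fin n) (Fin n) ℝ)
    (hAbar : ∀ t, Abar t = A + F - B * ((2 : ℝ) • R)⁻¹ * Bᵀ * (S t + P₁₃ t))
    (Gbar : ℝ → Matrix (Fin n) (Fin n) ℝ)
    (hGbar : ∀ t, Gbar t = G - B * ((2 : ℝ) • R)⁻¹ * Bᵀ * P₁₂ t)
    (𝓐₀ : ℝ → Matrix (Fin n ⊕ Fin n) (Fin n ⊕ Fin n) ℝ)
    (h𝓐₀ : ∀ t, 𝓐₀ t = Matrix.fromBlocks A₀ F₀ (Gbar t) (Abar t))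
    (𝓢 : ℝ → Matrix (Fin n) (Fin n ⊕ Fin n) ℝ)
    (h𝓢 : ∀ t, 𝓢 t = Matrix.fromCols (P₁₃ t) (P₁₂ t))
    (𝓛 : ℝ → Matrix (Fin n ⊕ Fin n) (Fin n ⊕ Fin n) ℝ)
    (h𝓛 : ∀ t, 𝓛 t = Matrix.fromBlocks (A + F - B * ((2 : ℝ) • R)⁻¹ * Bᵀ * S t) G F₀ A₀)
    (𝓑₀ : Matrix (Fin n ⊕ Fin n) (Fin m) ℝ) (h𝓑₀ : 𝓑₀ = Matrix.fromRows B₀ 0)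
    (𝓑bar : Matrix (Fin n ⊕ Fin n) (Fin m) ℝ) (h𝓑bar : 𝓑bar = Matrix.fromRows B 0)
    (𝓑bar₀ : Matrix (Fin n ⊕ Fin n) (Fin m) ℝ) (h𝓑bar₀ : 𝓑bar₀ = Matrix.fromRows 0 B₀)
    (ηbar₀ : (Fin n ⊕ Fin n) → ℝ)
    (hηbar₀ : ηbar₀ = Sum.elim (Q₀ *ᵥ η₀) (-(H₀ᵀ *ᵥ (Q₀ *ᵥ η₀))))
    (f₀ : (Fin n ⊕ Fin n) → ℝ)
    (hf₀ : f₀ = Sum.elim (H₀ᵀ *ᵥ (Q₀ *ᵥ η₀)) (-(Q₀ *ᵥ η₀)))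
    (J : Matrix (Fin n ⊕ Fin n) (Fin n ⊕ Fin n) ℝ)
    (hJ : J = Matrix.fromBlocks 0 (1 : Matrix (Fin n) (Fin n) ℝ)
        (1 : Matrix (Fin n) (Fin n) ℝ) 0)
    (P₀ : ℝ → Matrix (Fin n ⊕ Fin n) (Fin n ⊕ Fin n) ℝ) (hP₀ : Continuous P₀)
    (s₁ : ℝ → Fin n → ℝ) (hs₁ : Continuous s₁)
    (K : ℝ → Matrix (Fin n ⊕ Fin n) (Fin n ⊕ Fin n) ℝ)
    (hK : ∀ t, K t = J * P₀ t * J)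
    (𝓜₀ : ℝ → (Fin n ⊕ Fin n) → ℝ)
    (h𝓜₀ : ∀ t, 𝓜₀ t = Sum.elim (fun _ => (0 : ℝ))
        (-((B * ((2 : ℝ) • R)⁻¹ * Bᵀ) *ᵥ s₁ t)))
    (s₀ : ℝ → (Fin n ⊕ Fin n) → ℝ)
    (hdiff : ∀ t ∈ Icc (0 : ℝ) T, ∀ i, DifferentiableAt ℝ (fun τ => s₀ τ i) t)
    (k : ℝ → (Fin n ⊕ Fin n) → ℝ)
    (hk : ∀ t, k t = J *ᵥ s₀ t) :
    ((∀ t ∈ Icc (0 : ℝ) T, ∀ i, HasDerivAt (fun τ => s₀ τ i)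
        ((-(((𝓐₀ t)ᵀ - P₀ t * 𝓑₀ * ((2 : ℝ) • R₀)⁻¹ * 𝓑₀ᵀ) *ᵥ s₀ t
            + P₀ t *ᵥ 𝓜₀ t - (2 : ℝ) • ηbar₀)) i) t)
      ∧ s₀ T = 0)
    ↔ ((∀ t ∈ Icc (0 : ℝ) T, ∀ i, HasDerivAt (fun τ => k τ i)
        ((-((𝓛 t - 𝓑bar * ((2 : ℝ) • R)⁻¹ * Bᵀ * 𝓢 t)ᵀ *ᵥ k t
            - (K t * 𝓑bar₀ * ((2 : ℝ) • R₀)⁻¹ * 𝓑bar₀ᵀ) *ᵥ k t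
            - (K t * 𝓑bar * ((2 : ℝ) • R)⁻¹ * Bᵀ) *ᵥ s₁ t + (2 : ℝ) • f₀)) i) t)
      ∧ k T = 0) :=
  major_offset_equivalence_general n m T A₀ F₀ A F G Q₀ H₀ B₀ B R₀ R η₀ S P₁₂ P₁₃ Abar hAbar Gbar
    hGbar 𝓐₀ h𝓐₀ 𝓢 h𝓢 𝓛 h𝓛 𝓑₀ h𝓑₀ 𝓑bar h𝓑bar 𝓑bar₀ h𝓑bar₀ ηbar₀ hηbar₀ f₀ hf₀ J hJ P₀ s₁ K hK 𝓜₀ h𝓜₀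
    s₀ k hk
end

section
/- Let Π₁₁ : ℝ → ℝ^{n×n} and Π₀ : ℝ → ℝ^{2n×2n} be continuous, let 𝔸₀ : ℝ → ℝ^{2n×2n} be continuous, and set K(t) := 𝔦Π₀(t)𝔦. Suppose the consistency relation 𝔦𝔸₀(t)𝔦 = 𝕃(t) − 𝔹̄(2R)⁻¹Bᵀ𝕊(t) holds for all t, where for a differentiable Π̄₁₂ : ℝ → ℝ^{n×2n} we set 𝕊(t) := Π̄₁₂(t)𝔦 and 𝕃(t) := [[A + F − B(2R)⁻¹BᵀΠ₁₁(t), G], [F₀, A₀]]. Then Π̄₁₂ satisfies −(d/dt)Π̄₁₂(t) = Π₁₁(t)[G F] + AᵀΠ̄₁₂(t) + Π̄₁₂(t)(𝔸₀(t) − 𝔹₀(2R₀)⁻¹𝔹₀ᵀΠ₀(t)) − Π₁₁(t)B(2R)⁻¹BᵀΠ̄₁₂(t) − 2Q[H Ĥ] on [0,T] with Π̄₁₂(T) = 0 if and only if 𝕊 satisfies −𝕊̇(t) = 𝕊(t)(𝕃(t) − 𝔹̄(2R)⁻¹Bᵀ𝕊(t)) − 𝕊(t)𝔹̄₀(2R₀)⁻¹𝔹̄₀ᵀK(t)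 + (Aᵀ − Π₁₁(t)B(2R)⁻¹Bᵀ)𝕊(t) + [Π₁₁(t)F − 2QĤ, Π₁₁(t)G − 2QH] on [0,T] with 𝕊(T) = 0. -/
open Matrix Set

/-! Right multiplication by the block swap `𝔦` only permutes columns, so it carries entrywise
solutions of a terminal-value problem to solutions of the permuted one. It remains to see that
it carries the right-hand side for `Π̄₁₂` to the one for `𝕊 = Π̄₁₂ 𝔦`: since `𝔦² = 1`,
`Π̄₁₂ X 𝔦 = 𝕊 (𝔦 X 𝔦)`, which turns `𝔸₀` into `𝔦 𝔸₀ 𝔦`, given by the consistency relation, and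
`𝔹₀ (2R₀)⁻¹ 𝔹₀ᵀ Π₀` into `𝔹̄₀ (2R₀)⁻¹ 𝔹̄₀ᵀ K` because `𝔦 𝔹₀ = 𝔹̄₀` and `𝔦ᵀ = 𝔦`. -/

namespace Matrix

variable {ι l n α : Type*} [DecidableEq ι]

theorem fromBlocks_zero_one_one_zero_eq_toMatrix [Zero α] [One α] :
    (fromBlocks 0 1 1 0 : Matrix (ι ⊕ ι) (ι ⊕ ι) α) = (Equiv.sumComm ι ι).toPEquiv.toMatrix := by
  ext (i | i) (j | j) <;> simp [PEquiv.toMatrix_apply, one_apply, eq_comm]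

theorem transpose_fromBlocks_zero_one_one_zero [Zero α] [One α] :
    (fromBlocks 0 1 1 0 : Matrix (ι ⊕ ι) (ι ⊕ ι) α)ᵀ = fromBlocks 0 1 1 0 := by
  simp [fromBlocks_transpose]

variable [Fintype ι] [NonAssocSemiring α]

theorem mul_fromBlocks_zero_one_one_zero (M : Matrix l (ι ⊕ ι) α) :
    M * (fromBlocks 0 1 1 0 : Matrix (ι ⊕ ι) (ι ⊕ ι) α) = M.submatrix id (Equiv.sumComm ι ι) := by
  rw [fromBlocks_zero_one_one_zero_eq_toMatrix, PEquiv.mul_toMatrix_toPEquiv]; rfl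

theorem fromBlocks_zero_one_one_zero_mul (M : Matrix (ι ⊕ ι) n α) :
    (fromBlocks 0 1 1 0 : Matrix (ι ⊕ ι) (ι ⊕ ι) α) * M = M.submatrix (Equiv.sumComm ι ι) id := by
  rw [fromBlocks_zero_one_one_zero_eq_toMatrix, PEquiv.toMatrix_toPEquiv_mul]

theorem fromBlocks_zero_one_one_zero_mul_self :
    (fromBlocks 0 1 1 0 * fromBlocks 0 1 1 0 : Matrix (ι ⊕ ι) (ι ⊕ ι) α) = 1 := by
  rw [fromBlocks_multiply]; simp

theorem fromCols_mul_fromBlocks_zero_one_one_zero (X Y : Matrix l ι α) :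
    fromCols X Y * (fromBlocks 0 1 1 0 : Matrix (ι ⊕ ι) (ι ⊕ ι) α) = fromCols Y X := by
  rw [mul_fromBlocks_zero_one_one_zero]
  ext i (j | j) <;> rfl

theorem fromBlocks_zero_one_one_zero_mul_fromRows (X Y : Matrix ι n α) :
    (fromBlocks 0 1 1 0 : Matrix (ι ⊕ ι) (ι ⊕ ι) α) * fromRows X Y = fromRows Y X := by
  rw [fromBlocks_zero_one_one_zero_mul]
  ext (i | i) j <;> rfl

theorem fromCols_sub {m n₁ n₂ R : Type*} [Sub R] (A₁ B₁ : Matrix m n₁ R) (A₂ B₂ : Matrix m n₂ R) :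
    fromCols (A₁ - B₁) (A₂ - B₂) = fromCols A₁ A₂ - fromCols B₁ B₂ := by
  ext i (j | j) <;> rfl

theorem fromCols_smul {m n₁ n₂ R S : Type*} [SMul S R] (c : S) (A₁ : Matrix m n₁ R)
    (A₂ : Matrix m n₂ R) : fromCols (c • A₁) (c • A₂) = c • fromCols A₁ A₂ := by
  ext i (j | j) <;> rfl

theorem submatrix_eq_zero_iff {m m' n n' R : Type*} [Zero R] {M : Matrix m n R} {r : m' → m}
    {c : n' → n} (hr : r.Surjective) (hc : c.Surjective) : M.submatrix r c = 0 ↔ M = 0 := by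
  refine ⟨fun h => ?_, by rintro rfl; rfl⟩
  ext i j
  obtain ⟨i, rfl⟩ := hr i
  obtain ⟨j, rfl⟩ := hc j
  exact congr_fun₂ h i j

end Matrix

theorem hasDerivAt_submatrix_terminal_iff {𝕜 E m n n' : Type*} [NontriviallyNormedField 𝕜]
    [NormedAddCommGroup E] [NormedSpace 𝕜 E] {s : Set 𝕜} {T : 𝕜} (σ : n' ≃ n)
    {f D : 𝕜 → Matrix m n E} {g D' : 𝕜 → Matrix m n' E}
    (hg : ∀ τ, g τ = (f τ).submatrix id σ) (hD' : ∀ t, D' t = (D t).submatrix id σ) :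
    ((∀ t ∈ s, ∀ i j, HasDerivAt (fun τ => f τ i j) (D t i j) t) ∧ f T = 0) ↔
      ((∀ t ∈ s, ∀ i j, HasDerivAt (fun τ => g τ i j) (D' t i j) t) ∧ g T = 0) := by
  simp only [hg, hD', submatrix_apply, id,
    submatrix_eq_zero_iff Function.surjective_id σ.surjective]
  exact and_congr_left' (forall₂_congr fun _ _ => forall_congr' fun _ => σ.forall_congr_right.symm)

variable {ι κ α : Type*} [Fintype ι] [DecidableEq ι] [Fintype κ] [CommRing α]

theorem offDiagonalDrift_mul_blockSwap {c : α} {A F G Q H Ĥ P₁₁ : Matrix ι ι α}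
    {B : Matrix ι κ α} {𝔹₀ 𝔹bar₀ : Matrix (ι ⊕ ι) κ α} {W W₀ : Matrix κ κ α}
    {𝔸₀ P₀ J : Matrix (ι ⊕ ι) (ι ⊕ ι) α} {Pb : Matrix ι (ι ⊕ ι) α}
    (hJ : J = fromBlocks 0 1 1 0) (h𝔹₀ : J * 𝔹₀ = 𝔹bar₀) :
    (-(P₁₁ * fromCols G F + Aᵀ * Pb + Pb * (𝔸₀ - 𝔹₀ * W₀ * 𝔹₀ᵀ * P₀)
        - P₁₁ * B * W * Bᵀ * Pb - c • (Q * fromCols H Ĥ))) * J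
      = -(Pb * J * (J * 𝔸₀ * J) - Pb * J * 𝔹bar₀ * W₀ * 𝔹bar₀ᵀ * (J * P₀ * J)
        + (Aᵀ - P₁₁ * B * W * Bᵀ) * (Pb * J)
        + fromCols (P₁₁ * F - c • (Q * Ĥ)) (P₁₁ * G - c • (Q * H))) := by
  have hJJ : J * J = 1 := hJ ▸ fromBlocks_zero_one_one_zero_mul_self
  have hJT : Jᵀ = J := hJ ▸ transpose_fromBlocks_zero_one_one_zero
  have hcols : ∀ X Y : Matrix ι ι α, fromCols X Y * J = fromCols Y X :=
    hJ ▸ fromCols_mul_fromBlocks_zero_one_one_zero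
  have hconj : ∀ X : Matrix (ι ⊕ ι) (ι ⊕ ι) α, Pb * X * J = Pb * J * (J * X * J) := fun X => by
    simp only [Matrix.mul_assoc, ← Matrix.mul_assoc J J, hJJ, Matrix.one_mul]
  have hB₀ : J * (𝔹₀ * W₀ * 𝔹₀ᵀ * P₀) * J = 𝔹bar₀ * W₀ * 𝔹bar₀ᵀ * (J * P₀ * J) := by
    rw [← h𝔹₀, transpose_mul, hJT]
    simp only [Matrix.mul_assoc, ← Matrix.mul_assoc J J, hJJ, Matrix.one_mul]
  rw [Matrix.neg_mul, Matrix.sub_mul, Matrix.sub_mul, Matrix.add_mul, Matrix.add_mul, hconj,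
    Matrix.mul_sub J, Matrix.sub_mul, hB₀, Matrix.mul_sub, Matrix.mul_assoc P₁₁, hcols,
    Matrix.smul_mul, Matrix.mul_assoc Q, hcols, Matrix.mul_assoc Aᵀ,
    Matrix.mul_assoc (P₁₁ * B * W * Bᵀ), fromCols_sub, fromCols_smul, ← mul_fromCols,
    ← mul_fromCols, Matrix.sub_mul]
  simp only [Matrix.mul_assoc]
  abel

theorem minor_offdiagonal_equivalence_general
    (n m : ℕ) (T : ℝ)
    (A F G Q H Hhat : Matrix (Fin n) (Fin n) ℝ)
    (B₀ B : Matrix (Fin n) (Fin m) ℝ)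
    (R₀ R : Matrix (Fin m) (Fin m) ℝ)
    (𝓑₀ : Matrix (Fin n ⊕ Fin n) (Fin m) ℝ) (h𝓑₀ : 𝓑₀ = Matrix.fromRows B₀ 0)
    (𝓑bar : Matrix (Fin n ⊕ Fin n) (Fin m) ℝ)
    (𝓑bar₀ : Matrix (Fin n ⊕ Fin n) (Fin m) ℝ) (h𝓑bar₀ : 𝓑bar₀ = Matrix.fromRows 0 B₀)
    (J : Matrix (Fin n ⊕ Fin n) (Fin n ⊕ Fin n) ℝ)
    (hJ : J = Matrix.fromBlocks 0 (1 : Matrix (Fin n) (Fin n) ℝ)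
        (1 : Matrix (Fin n) (Fin n) ℝ) 0)
    (P₁₁ : ℝ → Matrix (Fin n) (Fin n) ℝ)
    (P₀ : ℝ → Matrix (Fin n ⊕ Fin n) (Fin n ⊕ Fin n) ℝ)
    (𝓐₀ : ℝ → Matrix (Fin n ⊕ Fin n) (Fin n ⊕ Fin n) ℝ)
    (K : ℝ → Matrix (Fin n ⊕ Fin n) (Fin n ⊕ Fin n) ℝ)
    (hK : ∀ t, K t = J * P₀ t * J)
    (Pb₁₂ : ℝ → Matrix (Fin n) (Fin n ⊕ Fin n) ℝ)
    (𝓢 : ℝ → Matrix (Fin n) (Fin n ⊕ Fin n) ℝ)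
    (h𝓢 : ∀ t, 𝓢 t = Pb₁₂ t * J)
    (𝓛 : ℝ → Matrix (Fin n ⊕ Fin n) (Fin n ⊕ Fin n) ℝ)
    (hconsistent : ∀ t, J * 𝓐₀ t * J = 𝓛 t - 𝓑bar * ((2 : ℝ) • R)⁻¹ * Bᵀ * 𝓢 t) :
    ((∀ t ∈ Icc (0 : ℝ) T, ∀ i j, HasDerivAt (fun τ => Pb₁₂ τ i j)
        ((-(P₁₁ t * Matrix.fromCols G F + Aᵀ * Pb₁₂ t
            + Pb₁₂ t * (𝓐₀ t - 𝓑₀ * ((2 : ℝ) • R₀)⁻¹ * 𝓑₀ᵀ * P₀ t)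
            - P₁₁ t * B * ((2 : ℝ) • R)⁻¹ * Bᵀ * Pb₁₂ t
            - (2 : ℝ) • (Q * Matrix.fromCols H Hhat))) i j) t)
      ∧ Pb₁₂ T = 0)
    ↔ ((∀ t ∈ Icc (0 : ℝ) T, ∀ i j, HasDerivAt (fun τ => 𝓢 τ i j)
        ((-(𝓢 t * (𝓛 t - 𝓑bar * ((2 : ℝ) • R)⁻¹ * Bᵀ * 𝓢 t)
            - 𝓢 t * 𝓑bar₀ * ((2 : ℝ) • R₀)⁻¹ * 𝓑bar₀ᵀ * K t
            + (Aᵀ - P₁₁ t * B * ((2 : ℝ) • R)⁻¹ * Bᵀ) * 𝓢 t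
            + Matrix.fromCols (P₁₁ t * F - (2 : ℝ) • (Q * Hhat))
                (P₁₁ t * G - (2 : ℝ) • (Q * H)))) i j) t)
      ∧ 𝓢 T = 0) := by
  have hswap : ∀ M : Matrix (Fin n) (Fin n ⊕ Fin n) ℝ,
      M * J = M.submatrix id (Equiv.sumComm (Fin n) (Fin n)) :=
    hJ ▸ mul_fromBlocks_zero_one_one_zero
  have h𝓑 : J * 𝓑₀ = 𝓑bar₀ := by
    rw [hJ, h𝓑₀, h𝓑bar₀, fromBlocks_zero_one_one_zero_mul_fromRows]
  refine hasDerivAt_submatrix_terminal_iff (Equiv.sumComm (Fin n) (Fin n))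
    (fun τ => by rw [h𝓢, hswap]) (fun t => ?_)
  rw [← hswap, offDiagonalDrift_mul_blockSwap hJ h𝓑, ← h𝓢, hconsistent, ← hK]

/-- The minor agent's off-diagonal-block consistency equation of
the Nash certainty equivalence approach is equivalent, under right
multiplication by the block-swap matrix `𝔦`, to the consistency equation for
`𝕊` of the probabilistic approach. -/
theorem minor_offdiagonal_equivalence
    (n m : ℕ) (hn : 0 < n) (hm : 0 < m) (T : ℝ) (hT : 0 < T)
    (A₀ F₀ A F G Q H Hhat : Matrix (Fin n) (Fin n) ℝ)
    (B₀ B : Matrix (Fin n) (Fin m) ℝ)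
    (R₀ R : Matrix (Fin m) (Fin m) ℝ) (hR₀ : IsUnit R₀.det) (hR : IsUnit R.det)
    (𝓑₀ : Matrix (Fin n ⊕ Fin n) (Fin m) ℝ) (h𝓑₀ : 𝓑₀ = Matrix.fromRows B₀ 0)
    (𝓑bar : Matrix (Fin n ⊕ Fin n) (Fin m) ℝ) (h𝓑bar : 𝓑bar = Matrix.fromRows B 0)
    (𝓑bar₀ : Matrix (Fin n ⊕ Fin n) (Fin m) ℝ) (h𝓑bar₀ : 𝓑bar₀ = Matrix.fromRows 0 B₀)
    (J : Matrix (Fin n ⊕ Fin n) (Fin n ⊕ Fin n) ℝ)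
    (hJ : J = Matrix.fromBlocks 0 (1 : Matrix (Fin n) (Fin n) ℝ)
        (1 : Matrix (Fin n) (Fin n) ℝ) 0)
    (P₁₁ : ℝ → Matrix (Fin n) (Fin n) ℝ) (hP₁₁ : Continuous P₁₁)
    (P₀ : ℝ → Matrix (Fin n ⊕ Fin n) (Fin n ⊕ Fin n) ℝ) (hP₀ : Continuous P₀)
    (𝓐₀ : ℝ → Matrix (Fin n ⊕ Fin n) (Fin n ⊕ Fin n) ℝ) (h𝓐₀ : Continuous 𝓐₀)
    (K : ℝ → Matrix (Fin n ⊕ Fin n) (Fin n ⊕ Fin n) ℝ)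
    (hK : ∀ t, K t = J * P₀ t * J)
    (Pb₁₂ : ℝ → Matrix (Fin n) (Fin n ⊕ Fin n) ℝ)
    (hdiff : ∀ t ∈ Icc (0 : ℝ) T, ∀ i j, DifferentiableAt ℝ (fun τ => Pb₁₂ τ i j) t)
    (𝓢 : ℝ → Matrix (Fin n) (Fin n ⊕ Fin n) ℝ)
    (h𝓢 : ∀ t, 𝓢 t = Pb₁₂ t * J)
    (𝓛 : ℝ → Matrix (Fin n ⊕ Fin n) (Fin n ⊕ Fin n) ℝ)
    (h𝓛 : ∀ t, 𝓛 t =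
      Matrix.fromBlocks (A + F - B * ((2 : ℝ) • R)⁻¹ * Bᵀ * P₁₁ t) G F₀ A₀)
    (hconsistent : ∀ t, J * 𝓐₀ t * J = 𝓛 t - 𝓑bar * ((2 : ℝ) • R)⁻¹ * Bᵀ * 𝓢 t) :
    ((∀ t ∈ Icc (0 : ℝ) T, ∀ i j, HasDerivAt (fun τ => Pb₁₂ τ i j)
        ((-(P₁₁ t * Matrix.fromCols G F + Aᵀ * Pb₁₂ t
            + Pb₁₂ t * (𝓐₀ t - 𝓑₀ * ((2 : ℝ) • R₀)⁻¹ * 𝓑₀ᵀ * P₀ t)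
            - P₁₁ t * B * ((2 : ℝ) • R)⁻¹ * Bᵀ * Pb₁₂ t
            - (2 : ℝ) • (Q * Matrix.fromCols H Hhat))) i j) t)
      ∧ Pb₁₂ T = 0)
    ↔ ((∀ t ∈ Icc (0 : ℝ) T, ∀ i j, HasDerivAt (fun τ => 𝓢 τ i j)
        ((-(𝓢 t * (𝓛 t - 𝓑bar * ((2 : ℝ) • R)⁻¹ * Bᵀ * 𝓢 t)
            - 𝓢 t * 𝓑bar₀ * ((2 : ℝ) • R₀)⁻¹ * 𝓑bar₀ᵀ * K t
            + (Aᵀ - P₁₁ t * B * ((2 : ℝ) • R)⁻¹ * Bᵀ) * 𝓢 t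
            + Matrix.fromCols (P₁₁ t * F - (2 : ℝ) • (Q * Hhat))
                (P₁₁ t * G - (2 : ℝ) • (Q * H)))) i j) t)
      ∧ 𝓢 T = 0) :=
  minor_offdiagonal_equivalence_general n m T A F G Q H Hhat B₀ B R₀ R 𝓑₀ h𝓑₀ 𝓑bar 𝓑bar₀ h𝓑bar₀ J hJ
    P₁₁ P₀ 𝓐₀ K hK Pb₁₂ 𝓢 h𝓢 𝓛 hconsistent
end
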